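/- arXiv:1906.08555 — 8 statements merged into one kernel-verified Lean document; each statement's English description precedes it below -/
import Mathlib

section
/- Let R be a Dedekind domain with fraction field K, V a K-vector space, (v, 𝔞) a pseudo-element (v ∈ V, 𝔞 a fractional ideal of R), and (v_i, 𝔞_i) for 1 ≤ i ≤ l pseudo-elements of V. If 𝔞v ⊆ Σ_i 𝔞_i v_i then there exist a_i ∈ 𝔞_i 𝔞⁻¹ such that v = Σ_i a_i v_i. -/
/-!
Write `∑ᵢ Iᵢ wᵢ` for the `R`-submodule of all `∑ᵢ cᵢ wᵢ` with `cᵢ ∈ Iᵢ`. If `𝔞 v ⊆ ∑ᵢ 𝔞ᵢ vᵢ`,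
multiplying by `𝔞⁻¹` gives `(𝔞 𝔞⁻¹) v ⊆ ∑ᵢ (𝔞ᵢ 𝔞⁻¹) vᵢ`; in a Dedekind domain `𝔞 𝔞⁻¹ = R ∋ 1`,
so `v` itself lies in `∑ᵢ (𝔞ᵢ 𝔞⁻¹) vᵢ`.
-/

section PseudoSum

variable {ι R M : Type*} [Fintype ι] [CommSemiring R] [AddCommMonoid M] [Module R M]

section Semiring

variable {A : Type*} [Semiring A] [Algebra R A] [Module A M] [IsScalarTower R A M]

def pseudoSum (I : ι → Submodule R A) (w : ι → M) : Submodule R M :=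
  LinearMap.range (∑ i, (LinearMap.toSpanSingleton A M (w i)).restrictScalars R ∘ₗ
    (I i).subtype ∘ₗ LinearMap.proj i)

theorem mem_pseudoSum_iff {I : ι → Submodule R A} {w : ι → M} {x : M} :
    x ∈ pseudoSum I w ↔ ∃ c : ι → A, (∀ i, c i ∈ I i) ∧ ∑ i, c i • w i = x := by
  constructor
  · rintro ⟨y, rfl⟩
    exact ⟨fun i => y i, fun i => (y i).2, by simp⟩
  · rintro ⟨c, hc, rfl⟩
    exact ⟨fun i => ⟨c i, hc i⟩, by simp⟩

theorem span_le_pseudoSum (I : ι → Submodule R A) (w : ι → M) :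
    Submodule.span R (⋃ i, {x : M | ∃ c ∈ I i, x = c • w i}) ≤ pseudoSum I w := by
  classical
  refine Submodule.span_le.2 ?_
  rintro _ ⟨_, ⟨i, rfl⟩, c, hc, rfl⟩
  refine mem_pseudoSum_iff.2 ⟨Pi.single i c, fun j => ?_, by simp [Pi.single_apply]⟩
  rcases eq_or_ne j i with rfl | hj
  · simpa using hc
  · simp [hj]

end Semiring

theorem smul_mem_pseudoSum_mul {A : Type*} [CommSemiring A] [Algebra R A] [Module A M]
    [IsScalarTower R A M] {I : ι → Submodule R A} {w : ι → M} {𝔞 𝔟 : Submodule R A} {v : M}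
    (h : ∀ α ∈ 𝔞, α • v ∈ pseudoSum I w) :
    ∀ x ∈ 𝔞 * 𝔟, x • v ∈ pseudoSum (fun i => I i * 𝔟) w := by
  intro x hx
  refine Submodule.mul_induction_on hx (fun α hα β hβ => ?_) fun x y hx hy => ?_
  · obtain ⟨c, hc, hcv⟩ := mem_pseudoSum_iff.1 (h α hα)
    refine mem_pseudoSum_iff.2 ⟨fun i => c i * β, fun i => Submodule.mul_mem_mul (hc i) hβ, ?_⟩
    rw [mul_comm, mul_smul, ← hcv, Finset.smul_sum]
    simp only [smul_smul, mul_comm β]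
  · rw [add_smul]
    exact add_mem hx hy

end PseudoSum

theorem stmt0_general {R : Type*} [CommRing R] [IsDedekindDomain R]
    {V : Type*} [AddCommGroup V] [Module (FractionRing R) V]
    [Module R V] [IsScalarTower R (FractionRing R) V]
    (l : ℕ) (v : V)
    (𝔞 : FractionalIdeal (nonZeroDivisors R) (FractionRing R))
    (vi : Fin l → V)
    (𝔞i : Fin l → FractionalIdeal (nonZeroDivisors R) (FractionRing R))
    (h𝔞 : 𝔞 ≠ 0)
    (h : ∀ a ∈ 𝔞, a • v ∈
      Submodule.span R (⋃ i, {x : V | ∃ c ∈ 𝔞i i, x = c • vi i})) :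
    ∃ a : Fin l → FractionRing R,
      (∀ i, a i ∈ 𝔞i i * 𝔞⁻¹) ∧ v = ∑ i, a i • vi i := by
  have h_one : (1 : FractionRing R) ∈ (𝔞 : Submodule R (FractionRing R)) * ↑𝔞⁻¹ := by
    rw [← FractionalIdeal.coe_mul, mul_inv_cancel₀ h𝔞]
    exact FractionalIdeal.one_mem_one _
  simp only [← FractionalIdeal.mem_coe] at h
  have hv := smul_mem_pseudoSum_mul (fun α hα => span_le_pseudoSum _ vi (h α hα)) 1 h_one
  obtain ⟨a, ha, hsum⟩ := mem_pseudoSum_iff.1 hv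
  refine ⟨a, fun i => ?_, by rw [hsum, one_smul]⟩
  rw [← FractionalIdeal.mem_coe, FractionalIdeal.coe_mul]
  exact ha i

/-- Let `R` be a Dedekind domain with fraction field `K`, `V` a `K`-vector
space, `(v, 𝔞)` a pseudo-element and `(vᵢ, 𝔞ᵢ)` pseudo-elements of `V`. If
`𝔞 v ⊆ ∑ᵢ 𝔞ᵢ vᵢ` then there exist `aᵢ ∈ 𝔞ᵢ 𝔞⁻¹` with `v = ∑ᵢ aᵢ vᵢ`. -/
theorem stmt0 {R : Type*} [CommRing R] [IsDomain R] [IsDedekindDomain R]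
    {V : Type*} [AddCommGroup V] [Module (FractionRing R) V]
    [Module R V] [IsScalarTower R (FractionRing R) V]
    (l : ℕ) (v : V)
    (𝔞 : FractionalIdeal (nonZeroDivisors R) (FractionRing R))
    (vi : Fin l → V)
    (𝔞i : Fin l → FractionalIdeal (nonZeroDivisors R) (FractionRing R))
    (h𝔞 : 𝔞 ≠ 0) (h𝔞i : ∀ i, 𝔞i i ≠ 0)
    (h : ∀ a ∈ 𝔞, a • v ∈
      Submodule.span R (⋃ i, {x : V | ∃ c ∈ 𝔞i i, x = c • vi i})) :
    ∃ a : Fin l → FractionRing R,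
      (∀ i, a i ∈ 𝔞i i * 𝔞⁻¹) ∧ v = ∑ i, a i • vi i :=
  stmt0_general l v 𝔞 vi 𝔞i h𝔞 h
end

section
/- Let R be a Dedekind domain with fraction field K, M an R[x₁,...,xₙ]-module, and (v_i, 𝔞_i) for 1 ≤ i ≤ l pseudo-elements of M such that the R[x]-submodule generated by the sets 𝔞_i v_i equals M. Then for any pseudo-element (v, 𝔞) of M, there exist polynomials f_i ∈ (𝔞_i 𝔞⁻¹)[x] such that v = Σ_i f_i v_i. -/
/-!
The sums `∑ gᵢ • vᵢ` with `gᵢ ∈ 𝔞ᵢ[x]` form an `R[x]`-submodule containing the generators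
`𝔞ᵢ vᵢ`, so they exhaust `M`. Since `𝔞 𝔞⁻¹ = R`, write `1 = ∑ₖ aₖ bₖ` with `aₖ ∈ 𝔞`, `bₖ ∈ 𝔞⁻¹`;
expanding each `aₖ v ∈ M` in this form, `v = ∑ₖ bₖ (aₖ v)` has coefficients in `𝔞ᵢ 𝔞⁻¹`.
-/

open MvPolynomial

attribute [local instance] MvPolynomial.algebraMvPolynomial

namespace MvPolynomial

variable {R S σ : Type*} [CommSemiring R] [CommSemiring S] [Algebra R S]

lemma map_mem_coeffsIn_one (p : MvPolynomial σ R) :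
    map (algebraMap R S) p ∈ coeffsIn σ (1 : Submodule R S) :=
  fun d => by rw [coeff_map]; exact Submodule.algebraMap_mem _

lemma algebraMap_mul_mem_coeffsIn {I : Submodule R S} (p : MvPolynomial σ R)
    {g : MvPolynomial σ S} (hg : g ∈ coeffsIn σ I) :
    algebraMap (MvPolynomial σ R) (MvPolynomial σ S) p * g ∈ coeffsIn σ I := by
  simpa only [algebraMap_def, one_mul, ← coeffsIn_mul] using
    Submodule.mul_mem_mul (map_mem_coeffsIn_one p) hg

lemma mul_C_mem_coeffsIn_mul {I J : Submodule R S} {g : MvPolynomial σ S}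
    (hg : g ∈ coeffsIn σ I) {b : S} (hb : b ∈ J) : g * C b ∈ coeffsIn σ (I * J) := by
  rw [coeffsIn_mul]
  exact Submodule.mul_mem_mul hg (C_mem_coeffsIn.mpr hb)

variable (σ) in
def polyCoeffsIn (I : Submodule R S) : Submodule (MvPolynomial σ R) (MvPolynomial σ S) where
  __ := coeffsIn σ I
  smul_mem' p _ hg := algebraMap_mul_mem_coeffsIn p hg

section PseudoSpan

variable {ι V : Type*} [Fintype ι] [AddCommMonoid V] [Module (MvPolynomial σ S) V]
  [Module (MvPolynomial σ R) V] [IsScalarTower (MvPolynomial σ R) (MvPolynomial σ S) V]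

variable (σ) in
noncomputable def pseudoSpan (I : ι → Submodule R S) (v : ι → V) :
    Submodule (MvPolynomial σ R) V :=
  (Submodule.pi Set.univ fun i => polyCoeffsIn σ (I i)).map
    ((Fintype.linearCombination (MvPolynomial σ S) v).restrictScalars (MvPolynomial σ R))

variable {I : ι → Submodule R S} {v : ι → V}

lemma mem_pseudoSpan {w : V} : w ∈ pseudoSpan σ I v ↔
    ∃ f : ι → MvPolynomial σ S, (∀ i, f i ∈ coeffsIn σ (I i)) ∧ ∑ i, f i • v i = w := by
  simp [pseudoSpan, Fintype.linearCombination_apply, polyCoeffsIn]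

lemma span_le_pseudoSpan : Submodule.span (MvPolynomial σ R)
    (⋃ i, {x : V | ∃ c ∈ I i, x = (C c : MvPolynomial σ S) • v i}) ≤ pseudoSpan σ I v := by
  classical
  simp only [Submodule.span_le, Set.iUnion_subset_iff]
  rintro i _ ⟨c, hc, rfl⟩
  refine mem_pseudoSpan.mpr ⟨Pi.single i (C c), fun j => ?_, by simp [Pi.single_apply]⟩
  rcases eq_or_ne j i with rfl | hj
  · simpa using hc
  · simp [hj]

lemma C_smul_mem_pseudoSpan_mul {J : Submodule R S} {w : V} (hw : w ∈ pseudoSpan σ I v)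
    {b : S} (hb : b ∈ J) : (C b : MvPolynomial σ S) • w ∈ pseudoSpan σ (fun i => I i * J) v := by
  obtain ⟨f, hf, rfl⟩ := mem_pseudoSpan.mp hw
  refine mem_pseudoSpan.mpr ⟨fun i => f i * C b, fun i => mul_C_mem_coeffsIn_mul (hf i) hb, ?_⟩
  simp only [Finset.smul_sum, smul_smul, mul_comm]

lemma C_smul_mem_pseudoSpan_of_mem_mul {J N : Submodule R S} {w : V}
    (hw : ∀ a ∈ J, (C a : MvPolynomial σ S) • w ∈ pseudoSpan σ I v) {t : S} (ht : t ∈ J * N) :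
    (C t : MvPolynomial σ S) • w ∈ pseudoSpan σ (fun i => I i * N) v := by
  induction ht using Submodule.mul_induction_on' with
  | mem_mul_mem a ha b hb =>
    rw [mul_comm, C_mul, mul_smul]
    exact C_smul_mem_pseudoSpan_mul (hw a ha) hb
  | add x _ y _ hx hy =>
    rw [C_add, add_smul]
    exact add_mem hx hy

end PseudoSpan

end MvPolynomial

theorem stmt1_general {R : Type*} [CommRing R] [IsDedekindDomain R]
    {n l : ℕ} {V : Type*} [AddCommGroup V]
    [Module (MvPolynomial (Fin n) (FractionRing R)) V]
    [Module (MvPolynomial (Fin n) R) V]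
    [IsScalarTower (MvPolynomial (Fin n) R) (MvPolynomial (Fin n) (FractionRing R)) V]
    (M : Submodule (MvPolynomial (Fin n) R) V)
    (vi : Fin l → V)
    (𝔞i : Fin l → FractionalIdeal (nonZeroDivisors R) (FractionRing R))
    (hgen : M = Submodule.span (MvPolynomial (Fin n) R)
      (⋃ i, {x : V | ∃ c ∈ 𝔞i i, x = (C c : MvPolynomial (Fin n) (FractionRing R)) • vi i}))
    (v : V) (𝔞 : FractionalIdeal (nonZeroDivisors R) (FractionRing R)) (h𝔞 : 𝔞 ≠ 0)
    (hv : ∀ a ∈ 𝔞, (C a : MvPolynomial (Fin n) (FractionRing R)) • v ∈ M) :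
    ∃ f : Fin l → MvPolynomial (Fin n) (FractionRing R),
      (∀ i, ∀ d, (f i).coeff d ∈ 𝔞i i * 𝔞⁻¹) ∧ v = ∑ i, f i • vi i := by
  have hM : M ≤ pseudoSpan (Fin n) (fun i => (𝔞i i : Submodule R (FractionRing R))) vi :=
    hgen.trans_le span_le_pseudoSpan
  have hone : (1 : FractionRing R) ∈ (𝔞 : Submodule R (FractionRing R)) * ↑𝔞⁻¹ := by
    rw [← FractionalIdeal.coe_mul, mul_inv_cancel₀ h𝔞]
    exact FractionalIdeal.one_mem_one _
  obtain ⟨f, hf, hfv⟩ := mem_pseudoSpan.mp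
    (C_smul_mem_pseudoSpan_of_mem_mul (fun a ha => hM (hv a ha)) hone)
  refine ⟨f, fun i d => ?_, by simpa using hfv.symm⟩
  rw [← FractionalIdeal.mem_coe, FractionalIdeal.coe_mul]
  exact hf i d

/-- Let `R` be a Dedekind domain with fraction field `K`, `M` an
`R[x₁,…,xₙ]`-module (realized as an `R[x]`-submodule of a `K[x]`-module `V`), and
`(vᵢ, 𝔞ᵢ)` pseudo-elements of `M` such that the `R[x]`-submodule generated by the
sets `𝔞ᵢ vᵢ` equals `M`. Then for any pseudo-element `(v, 𝔞)` of `M` there exist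
polynomials `fᵢ ∈ (𝔞ᵢ 𝔞⁻¹)[x]` with `v = ∑ᵢ fᵢ vᵢ`. -/
theorem stmt1 {R : Type*} [CommRing R] [IsDomain R] [IsDedekindDomain R]
    {n l : ℕ} {V : Type*} [AddCommGroup V]
    [Module (MvPolynomial (Fin n) (FractionRing R)) V]
    [Module (MvPolynomial (Fin n) R) V]
    [IsScalarTower (MvPolynomial (Fin n) R) (MvPolynomial (Fin n) (FractionRing R)) V]
    (M : Submodule (MvPolynomial (Fin n) R) V)
    (vi : Fin l → V)
    (𝔞i : Fin l → FractionalIdeal (nonZeroDivisors R) (FractionRing R))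
    (h𝔞i : ∀ i, 𝔞i i ≠ 0)
    (hvi : ∀ i, ∀ a ∈ 𝔞i i, (C a : MvPolynomial (Fin n) (FractionRing R)) • vi i ∈ M)
    (hgen : M = Submodule.span (MvPolynomial (Fin n) R)
      (⋃ i, {x : V | ∃ c ∈ 𝔞i i, x = (C c : MvPolynomial (Fin n) (FractionRing R)) • vi i}))
    (v : V) (𝔞 : FractionalIdeal (nonZeroDivisors R) (FractionRing R)) (h𝔞 : 𝔞 ≠ 0)
    (hv : ∀ a ∈ 𝔞, (C a : MvPolynomial (Fin n) (FractionRing R)) • v ∈ M) :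
    ∃ f : Fin l → MvPolynomial (Fin n) (FractionRing R),
      (∀ i, ∀ d, (f i).coeff d ∈ 𝔞i i * 𝔞⁻¹) ∧ v = ∑ i, f i • vi i :=
  stmt1_general M vi 𝔞i hgen v 𝔞 h𝔞 hv
end

section
/- Let R be a Dedekind domain and 𝔞, 𝔟 fractional ideals of R. Then 𝔞·(𝔟[x]) = (𝔞𝔟)[x], where 𝔞[x] denotes the R[x]-module of polynomials in K[x₁,...,xₙ] with all coefficients in 𝔞. -/
open MvPolynomial

/-- Let `R` be a Dedekind domain and `𝔞, 𝔟` fractional ideals of `R`.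
Then `𝔞·(𝔟[x]) = (𝔞𝔟)[x]`, where `𝔞[x]` is the set of polynomials in `K[x₁,…,xₙ]`
all of whose coefficients lie in `𝔞`, and `𝔞·(𝔟[x])` is the `R`-submodule generated
by the products `a • f` with `a ∈ 𝔞`, `f ∈ 𝔟[x]`. -/
theorem stmt3 {R : Type*} [CommRing R] [IsDomain R] [IsDedekindDomain R] {n : ℕ}
    (𝔞 𝔟 : FractionalIdeal (nonZeroDivisors R) (FractionRing R))
    (h𝔞 : 𝔞 ≠ 0) (h𝔟 : 𝔟 ≠ 0) :
    (Submodule.span R {x : MvPolynomial (Fin n) (FractionRing R) |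
        ∃ a ∈ 𝔞, ∃ f : MvPolynomial (Fin n) (FractionRing R),
          (∀ d, f.coeff d ∈ 𝔟) ∧ x = a • f} : Set (MvPolynomial (Fin n) (FractionRing R)))
      = {f : MvPolynomial (Fin n) (FractionRing R) | ∀ d, f.coeff d ∈ 𝔞 * 𝔟} := by
  classical
  set K := FractionRing R
  set S : Set (MvPolynomial (Fin n) K) :=
    {x : MvPolynomial (Fin n) K |
        ∃ a ∈ 𝔞, ∃ f : MvPolynomial (Fin n) K,
          (∀ d, f.coeff d ∈ 𝔟) ∧ x = a • f} with hS
  apply Set.Subset.antisymm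
  · -- span S ⊆ RHS
    let M : Submodule R (MvPolynomial (Fin n) K) :=
      { carrier := {f : MvPolynomial (Fin n) K | ∀ d, f.coeff d ∈ 𝔞 * 𝔟}
        add_mem' := by
          intro f g hf hg d
          rw [MvPolynomial.coeff_add, ← FractionalIdeal.mem_coe]
          exact Submodule.add_mem _ (FractionalIdeal.mem_coe.mpr (hf d))
            (FractionalIdeal.mem_coe.mpr (hg d))
        zero_mem' := by
          intro d
          simp only [MvPolynomial.coeff_zero, ← FractionalIdeal.mem_coe]
          exact Submodule.zero_mem _
        smul_mem' := by
          intro r f hf d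
          rw [MvPolynomial.coeff_smul]
          exact Submodule.smul_mem _ r (hf d) }
    have : Submodule.span R S ≤ M := by
      rw [Submodule.span_le]
      rintro x ⟨a, ha, f, hf, rfl⟩ d
      rw [MvPolynomial.coeff_smul, smul_eq_mul]
      exact FractionalIdeal.mul_mem_mul ha (hf d)
    exact fun p hp => this hp
  · intro f hf
    rw [SetLike.mem_coe]
    have key : ∀ (d : Fin n →₀ ℕ) (c : K), c ∈ 𝔞 * 𝔟 →
        MvPolynomial.monomial d c ∈ Submodule.span R S := by
      intro d c hc
      rw [← FractionalIdeal.mem_coe, FractionalIdeal.coe_mul] at hc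
      refine Submodule.mul_induction_on hc ?_ ?_
      · intro a ha b hb
        have heq : (MvPolynomial.monomial d) (a * b)
            = a • MvPolynomial.monomial d b := by
          rw [MvPolynomial.smul_monomial, smul_eq_mul]
        rw [heq]
        refine Submodule.subset_span ⟨a, FractionalIdeal.mem_coe.mp ha,
          MvPolynomial.monomial d b, fun d' => ?_, rfl⟩
        rw [MvPolynomial.coeff_monomial]
        split_ifs
        · exact FractionalIdeal.mem_coe.mp hb
        · rw [← FractionalIdeal.mem_coe]
          exact Submodule.zero_mem _
      · intro x y hx hy
        rw [map_add]
        exact Submodule.add_mem _ hx hy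
    have hsum : (∑ v ∈ f.support, MvPolynomial.monomial v (f.coeff v))
        ∈ Submodule.span R S :=
      Submodule.sum_mem _ fun v _ => key v _ (hf v)
    rwa [← f.as_sum] at hsum
end

section
/- Let (h, 𝔣) be a one step reduction of a pseudo-polynomial (f, 𝔣) with respect to G = {(g_i, 𝔤_i)}, and let I = Σ_i 𝔤_i[x]·g_i be the ideal of R[x] generated by G. Then (h, 𝔣) is again a pseudo-polynomial of R[x] (i.e., 𝔣h ⊆ R[x]), and 𝔣[x]·(f − h) ⊆ I. -/
/-!
Since `𝔣` is invertible, `𝔣 · 𝔤ᵢ𝔣⁻¹ = 𝔤ᵢ`. So a polynomial with coefficients in `𝔣` times a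
reduction term `aᵢ x^(deg f - deg gᵢ) gᵢ` lies in `𝔤ᵢ[x] gᵢ`, and `c ∈ 𝔣` times it has
coefficients in `𝔤ᵢ · coeff(gᵢ) ⊆ R` because `(gᵢ, 𝔤ᵢ)` is a pseudo-polynomial. Both facts
pass to `f - h = ∑ᵢ aᵢ x^(deg f - deg gᵢ) gᵢ`.
-/

open MvPolynomial

attribute [local instance] MvPolynomial.algebraMvPolynomial

noncomputable def mdeg {σ : Type*} (m : MonomialOrder σ) {K : Type*} [CommSemiring K]
    (f : MvPolynomial σ K) : σ →₀ ℕ :=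
  m.toSyn.symm (f.support.sup fun d => m.toSyn d)

noncomputable def plc {σ : Type*} (m : MonomialOrder σ) {K : Type*} [CommSemiring K]
    (f : MvPolynomial σ K) : K :=
  f.coeff (mdeg m f)

/-- One step reduction of `(f, 𝔣)` to `(h, 𝔣)` with respect to the family of
pseudo-polynomials `(gᵢ, 𝔤ᵢ)`: there are `aᵢ ∈ 𝔤ᵢ 𝔣⁻¹`, supported on the set
`J = {i : LM(gᵢ) ∣ LM(f)}`, with `LC(f) = ∑ aᵢ LC(gᵢ)` and
`h = f - ∑ aᵢ x^{deg f - deg gᵢ} gᵢ`. -/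
def OneStep {R : Type*} [CommRing R] [IsDomain R] [IsDedekindDomain R] {n l : ℕ}
    (m : MonomialOrder (Fin n))
    (g : Fin l → MvPolynomial (Fin n) (FractionRing R))
    (𝔤 : Fin l → FractionalIdeal (nonZeroDivisors R) (FractionRing R))
    (𝔣 : FractionalIdeal (nonZeroDivisors R) (FractionRing R))
    (f h : MvPolynomial (Fin n) (FractionRing R)) : Prop :=
  ∃ a : Fin l → FractionRing R,
    (∀ i, a i ∈ 𝔤 i * 𝔣⁻¹) ∧
    (∀ i, a i ≠ 0 → ∃ γ, mdeg m f = mdeg m (g i) + γ) ∧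
    plc m f = ∑ i, a i * plc m (g i) ∧
    h = f - ∑ i, (monomial (mdeg m f - mdeg m (g i)) (a i)) * g i

/-- `(f, 𝔣)` is a pseudo-polynomial: `𝔣 f ⊆ R[x]`. -/
def IsPseudoPoly {R K σ : Type*} [CommRing R] [Field K] [Algebra R K]
    (𝔣 : FractionalIdeal (nonZeroDivisors R) K) (f : MvPolynomial σ K) : Prop :=
  ∀ c ∈ 𝔣, ∀ d, c * f.coeff d ∈ (1 : FractionalIdeal (nonZeroDivisors R) K)

theorem FractionalIdeal.mul_mem_of_mem_mul_inv {R K : Type*} [CommRing R] [IsDedekindDomain R]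
    [Field K] [Algebra R K] [IsFractionRing R K]
    {𝔣 𝔤 : FractionalIdeal (nonZeroDivisors R) K} (h𝔣 : 𝔣 ≠ 0)
    {c a : K} (hc : c ∈ 𝔣) (ha : a ∈ 𝔤 * 𝔣⁻¹) : c * a ∈ 𝔤 := by
  have : c * a ∈ 𝔣 * (𝔤 * 𝔣⁻¹) := FractionalIdeal.mul_mem_mul hc ha
  rwa [mul_comm 𝔤, ← mul_assoc, mul_inv_cancel₀ h𝔣, one_mul] at this

namespace IsPseudoPoly

variable {R K σ : Type*} [CommRing R] [Field K] [Algebra R K]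
  {𝔣 : FractionalIdeal (nonZeroDivisors R) K}

theorem sub {f g : MvPolynomial σ K} (hf : IsPseudoPoly 𝔣 f) (hg : IsPseudoPoly 𝔣 g) :
    IsPseudoPoly 𝔣 (f - g) := fun c hc d => by
  rw [coeff_sub, mul_sub, ← FractionalIdeal.mem_coe]
  exact sub_mem (hf c hc d) (hg c hc d)

theorem sum {ι : Type*} (s : Finset ι) {f : ι → MvPolynomial σ K}
    (hf : ∀ i ∈ s, IsPseudoPoly 𝔣 (f i)) : IsPseudoPoly 𝔣 (∑ i ∈ s, f i) := fun c hc d => by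
  rw [coeff_sum, Finset.mul_sum, ← FractionalIdeal.mem_coe]
  exact Submodule.sum_mem _ fun i hi => hf i hi c hc d

theorem monomial_mul [IsDedekindDomain R] [IsFractionRing R K]
    {𝔤 : FractionalIdeal (nonZeroDivisors R) K} {g : MvPolynomial σ K}
    (hg : IsPseudoPoly 𝔤 g) (h𝔣 : 𝔣 ≠ 0) (s : σ →₀ ℕ) {a : K} (ha : a ∈ 𝔤 * 𝔣⁻¹) :
    IsPseudoPoly 𝔣 (monomial s a * g) := fun c hc d => by
  rw [coeff_monomial_mul']
  split_ifs
  · rw [← mul_assoc]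
    exact hg _ (FractionalIdeal.mul_mem_of_mem_mul_inv h𝔣 hc ha) _
  · rw [mul_zero, ← FractionalIdeal.mem_coe]
    exact zero_mem _

end IsPseudoPoly

theorem MvPolynomial.mul_mem_span_C_mul {R K σ : Type*} [CommRing R] [CommRing K] [Algebra R K]
    (M : Submodule R K) (g : MvPolynomial σ K) {q : MvPolynomial σ K} (hq : ∀ d, q.coeff d ∈ M) :
    q * g ∈ Submodule.span (MvPolynomial σ R) {x | ∃ c ∈ M, x = C c * g} := by
  rw [q.as_sum, Finset.sum_mul]
  refine Submodule.sum_mem _ fun d _ => ?_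
  have hsmul : monomial d (q.coeff d) * g =
      (monomial d (1 : R) : MvPolynomial σ R) • (C (q.coeff d) * g) := by
    rw [Algebra.smul_def, algebraMap_def, map_monomial, map_one, ← mul_assoc,
      mul_comm (monomial d 1), C_mul_monomial, mul_one]
  rw [hsmul]
  exact Submodule.smul_mem _ _ (Submodule.subset_span ⟨q.coeff d, hq d, rfl⟩)

theorem MvPolynomial.coeff_mul_monomial_mem_of_mem_mul_inv {R K σ : Type*} [CommRing R]
    [IsDedekindDomain R] [Field K] [Algebra R K] [IsFractionRing R K]
    {𝔣 𝔤 : FractionalIdeal (nonZeroDivisors R) K} (h𝔣 : 𝔣 ≠ 0) {p : MvPolynomial σ K}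
    (hp : ∀ d, p.coeff d ∈ 𝔣) (s : σ →₀ ℕ) {a : K} (ha : a ∈ 𝔤 * 𝔣⁻¹) (d : σ →₀ ℕ) :
    (p * monomial s a).coeff d ∈ 𝔤 := by
  rw [coeff_mul_monomial']
  split_ifs
  · exact FractionalIdeal.mul_mem_of_mem_mul_inv h𝔣 (hp _) ha
  · rw [← FractionalIdeal.mem_coe]
    exact zero_mem _

theorem stmt7_general {R : Type*} [CommRing R] [IsDomain R] [IsDedekindDomain R] {n l : ℕ}
    (m : MonomialOrder (Fin n))
    (f h : MvPolynomial (Fin n) (FractionRing R))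
    (𝔣 : FractionalIdeal (nonZeroDivisors R) (FractionRing R))
    (h𝔣 : 𝔣 ≠ 0)
    (hpf : ∀ c ∈ 𝔣, ∀ d, c * f.coeff d ∈
      (1 : FractionalIdeal (nonZeroDivisors R) (FractionRing R)))
    (g : Fin l → MvPolynomial (Fin n) (FractionRing R))
    (𝔤 : Fin l → FractionalIdeal (nonZeroDivisors R) (FractionRing R))
    (hpg : ∀ i, ∀ c ∈ 𝔤 i, ∀ d, c * (g i).coeff d ∈
      (1 : FractionalIdeal (nonZeroDivisors R) (FractionRing R)))
    (hstep : OneStep m g 𝔤 𝔣 f h) :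
    (∀ c ∈ 𝔣, ∀ d, c * h.coeff d ∈
        (1 : FractionalIdeal (nonZeroDivisors R) (FractionRing R)))
    ∧ (∀ p : MvPolynomial (Fin n) (FractionRing R), (∀ d, p.coeff d ∈ 𝔣) →
        p * (f - h) ∈ Submodule.span (MvPolynomial (Fin n) R)
          (⋃ i, {x : MvPolynomial (Fin n) (FractionRing R) |
            ∃ c ∈ 𝔤 i, x = C c * g i})) := by
  obtain ⟨a, ha, -, -, rfl⟩ := hstep
  have hterm : ∀ i, IsPseudoPoly 𝔣 (monomial (mdeg m f - mdeg m (g i)) (a i) * g i) :=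
    fun i => IsPseudoPoly.monomial_mul (hpg i) h𝔣 _ (ha i)
  refine ⟨IsPseudoPoly.sub hpf (IsPseudoPoly.sum _ fun i _ => hterm i), fun p hp => ?_⟩
  rw [sub_sub_cancel, Finset.mul_sum]
  refine Submodule.sum_mem _ fun i _ => ?_
  rw [← mul_assoc]
  have hcoeff : ∀ d, (p * monomial (mdeg m f - mdeg m (g i)) (a i)).coeff d ∈ 𝔤 i :=
    coeff_mul_monomial_mem_of_mem_mul_inv h𝔣 hp _ (ha i)
  refine Submodule.span_mono (Set.subset_iUnion_of_subset i le_rfl) ?_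
  exact mul_mem_span_C_mul (𝔤 i : Submodule R (FractionRing R)) (g i) hcoeff

/-- If `(h, 𝔣)` is a one step reduction of `(f, 𝔣)` w.r.t.
`G = {(gᵢ, 𝔤ᵢ)}` and `I = ∑ᵢ 𝔤ᵢ[x]·gᵢ` is the ideal of `R[x]` generated by `G`, then
`(h, 𝔣)` is again a pseudo-polynomial (`𝔣 h ⊆ R[x]`) and `𝔣[x]·(f − h) ⊆ I`. -/
theorem stmt7 {R : Type*} [CommRing R] [IsDomain R] [IsDedekindDomain R] {n l : ℕ}
    (m : MonomialOrder (Fin n))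
    (f h : MvPolynomial (Fin n) (FractionRing R))
    (𝔣 : FractionalIdeal (nonZeroDivisors R) (FractionRing R))
    (hf : f ≠ 0) (h𝔣 : 𝔣 ≠ 0)
    (hpf : ∀ c ∈ 𝔣, ∀ d, c * f.coeff d ∈
      (1 : FractionalIdeal (nonZeroDivisors R) (FractionRing R)))
    (g : Fin l → MvPolynomial (Fin n) (FractionRing R))
    (𝔤 : Fin l → FractionalIdeal (nonZeroDivisors R) (FractionRing R))
    (hg : ∀ i, g i ≠ 0) (h𝔤 : ∀ i, 𝔤 i ≠ 0)
    (hpg : ∀ i, ∀ c ∈ 𝔤 i, ∀ d, c * (g i).coeff d ∈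
      (1 : FractionalIdeal (nonZeroDivisors R) (FractionRing R)))
    (hstep : OneStep m g 𝔤 𝔣 f h) :
    (∀ c ∈ 𝔣, ∀ d, c * h.coeff d ∈
        (1 : FractionalIdeal (nonZeroDivisors R) (FractionRing R)))
    ∧ (∀ p : MvPolynomial (Fin n) (FractionRing R), (∀ d, p.coeff d ∈ 𝔣) →
        p * (f - h) ∈ Submodule.span (MvPolynomial (Fin n) R)
          (⋃ i, {x : MvPolynomial (Fin n) (FractionRing R) |
            ∃ c ∈ 𝔤 i, x = C c * g i})) :=
  stmt7_general m f h 𝔣 h𝔣 hpf g 𝔤 hpg hstep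
end

section
/- Let (f, 𝔣) be a pseudo-polynomial and G = {(g_i, 𝔤_i) : 1 ≤ i ≤ l} nonzero pseudo-polynomials over a Dedekind domain R. Then there exist a pseudo-polynomial (r, 𝔣), minimal with respect to G, and polynomials h_i ∈ (𝔤_i𝔣⁻¹)[x] such that (f,𝔣) reduces to (r,𝔣) modulo G, f − r = Σ_i h_i g_i, and deg(f) = max(max_i deg(h_i g_i), deg(r)). -/
/-!
Since `𝔣` is invertible in the Dedekind domain, reducibility of `(f, 𝔣)` says that `LC(f)` lies in
`∑ 𝔤ᵢ𝔣⁻¹ · LC(gᵢ)`, the sum over those `i` with `LM(gᵢ) ∣ LM(f)`. Writing `LC(f) = ∑ aᵢ LC(gᵢ)`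
with `aᵢ ∈ 𝔤ᵢ𝔣⁻¹`, the one step reduction by `∑ aᵢ x^{deg f - deg gᵢ} gᵢ` cancels the leading term
of `f`, so the degree drops strictly and, the monomial order being a well-order, the iteration
stops at a minimal `r`. Each step only subtracts multiples `hᵢ gᵢ` of degree at most `deg f`, and
the reductions compose by adding up the `hᵢ`; from `f = r + ∑ hᵢ gᵢ` the degree of `f` is then the
maximum of these degrees.
-/

open MvPolynomial

attribute [local instance] MvPolynomial.algebraMvPolynomial

open Classical in
/-- `(f, 𝔣)` can be reduced modulo the family `(gᵢ, 𝔤ᵢ)`: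
`𝔣·LC(f) ⊆ ∑_{i ∈ J} 𝔤ᵢ·LC(gᵢ)` where `J = {i : LM(gᵢ) ∣ LM(f)}`. -/
noncomputable def Reducible {R : Type*} [CommRing R] [IsDomain R] [IsDedekindDomain R]
    {n l : ℕ} (m : MonomialOrder (Fin n))
    (g : Fin l → MvPolynomial (Fin n) (FractionRing R))
    (𝔤 : Fin l → FractionalIdeal (nonZeroDivisors R) (FractionRing R))
    (𝔣 : FractionalIdeal (nonZeroDivisors R) (FractionRing R))
    (f : MvPolynomial (Fin n) (FractionRing R)) : Prop :=
  𝔣 * FractionalIdeal.spanSingleton (nonZeroDivisors R) (plc m f) ≤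
    ∑ i ∈ Finset.univ.filter (fun i => ∃ γ, mdeg m f = mdeg m (g i) + γ),
      𝔤 i * FractionalIdeal.spanSingleton (nonZeroDivisors R) (plc m (g i))

theorem mdeg_eq_degree {σ K : Type*} [CommSemiring K] (m : MonomialOrder σ)
    (f : MvPolynomial σ K) : mdeg m f = m.degree f :=
  rfl

namespace FractionalIdeal

variable {R P ι : Type*} [CommRing R] {S : Submonoid R} [CommRing P] [Algebra R P]
  [IsLocalization S P] [Fintype ι] [DecidableEq ι]

theorem exists_eq_sum_mul_of_mem_sum_mul_spanSingleton {s : Finset ι}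
    {I : ι → FractionalIdeal S P} {c : ι → P} {x : P}
    (hx : x ∈ ∑ i ∈ s, I i * spanSingleton S (c i)) :
    ∃ a : ι → P, (∀ i, a i ∈ I i) ∧ (∀ i ∉ s, a i = 0) ∧ x = ∑ i, a i * c i := by
  induction s using Finset.induction_on generalizing x with
  | empty =>
    rw [Finset.sum_empty, mem_zero_iff] at hx
    exact ⟨0, fun i => zero_mem _, fun _ _ => rfl, by simp [hx]⟩
  | insert j s hj ih =>
    rw [Finset.sum_insert hj, mem_add] at hx
    obtain ⟨y, hy, z, hz, rfl⟩ := hx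
    obtain ⟨b, hb, rfl⟩ := mem_singleton_mul.mp (mul_comm (I j) _ ▸ hy)
    obtain ⟨a, ha, ha0, rfl⟩ := ih hz
    refine ⟨a + Pi.single j b, fun i => ?_, fun i hi => ?_, ?_⟩
    · rcases eq_or_ne i j with rfl | hij
      · simpa [ha0 i hj] using hb
      · simpa [hij] using ha i
    · rw [Finset.mem_insert, not_or] at hi
      simp [ha0 i hi.2, hi.1]
    · simp only [Pi.add_apply, add_mul, Finset.sum_add_distrib, Pi.single_apply, ite_mul,
        zero_mul, Finset.sum_ite_eq', Finset.mem_univ, if_true]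
      ring

end FractionalIdeal

namespace MonomialOrder

variable {σ R : Type*} {m : MonomialOrder σ} [CommRing R]

theorem coeff_monomial_sub_degree_mul {g : MvPolynomial σ R} {d : σ →₀ ℕ}
    (h : m.degree g ≤ d) (a : R) :
    (monomial (d - m.degree g) a * g).coeff d = a * m.leadingCoeff g := by
  rw [coeff_monomial_mul', if_pos tsub_le_self, tsub_tsub_cancel_of_le h, leadingCoeff]

theorem toSyn_degree_monomial_sub_degree_mul_le {g : MvPolynomial σ R} {d : σ →₀ ℕ}
    (h : m.degree g ≤ d) (a : R) :
    m.toSyn (m.degree (monomial (d - m.degree g) a * g)) ≤ m.toSyn d :=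
  calc m.toSyn (m.degree (monomial (d - m.degree g) a * g))
      ≤ m.toSyn (m.degree (monomial (d - m.degree g) a)) + m.toSyn (m.degree g) :=
        toSyn_degree_mul_le
    _ ≤ m.toSyn (d - m.degree g) + m.toSyn (m.degree g) := by
        gcongr; exact degree_monomial_le a
    _ = m.toSyn d := by rw [← map_add, tsub_add_cancel_of_le h]

theorem toSyn_degree_sub_lt {f p : MvPolynomial σ R}
    (hp : m.toSyn (m.degree p) ≤ m.toSyn (m.degree f))
    (hcoeff : p.coeff (m.degree f) = m.leadingCoeff f) (hfp : f - p ≠ 0) :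
    m.toSyn (m.degree (f - p)) < m.toSyn (m.degree f) := by
  refine lt_of_le_of_ne (degree_sub_le.trans (sup_le le_rfl hp)) fun heq => ?_
  apply (m.coeff_degree_ne_zero_iff).mpr hfp
  rw [m.toSyn.injective heq, coeff_sub, hcoeff, leadingCoeff, sub_self]

theorem toSyn_degree_eq_sup {ι : Type*} {s : Finset ι} {f r : MvPolynomial σ R}
    {p : ι → MvPolynomial σ R} (hsum : f - r = ∑ i ∈ s, p i)
    (hp : ∀ i ∈ s, m.toSyn (m.degree (p i)) ≤ m.toSyn (m.degree f))
    (hr : m.toSyn (m.degree r) ≤ m.toSyn (m.degree f)) :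
    m.toSyn (m.degree f) = (s.sup fun i => m.toSyn (m.degree (p i))) ⊔ m.toSyn (m.degree r) := by
  refine le_antisymm ?_ (sup_le (Finset.sup_le hp) hr)
  rw [eq_add_of_sub_eq' hsum, sup_comm]
  exact degree_add_le.trans (sup_le_sup_left degree_sum_le _)

end MonomialOrder

section Reduction

variable {R : Type*} [CommRing R] [IsDedekindDomain R] {n l : ℕ}
  (m : MonomialOrder (Fin n)) (g : Fin l → MvPolynomial (Fin n) (FractionRing R))
  (𝔤 : Fin l → FractionalIdeal (nonZeroDivisors R) (FractionRing R))
  (𝔣 : FractionalIdeal (nonZeroDivisors R) (FractionRing R))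

structure IsStandardReduction (f r : MvPolynomial (Fin n) (FractionRing R))
    (hs : Fin l → MvPolynomial (Fin n) (FractionRing R)) : Prop where
  reflTransGen : Relation.ReflTransGen (OneStep m g 𝔤 𝔣) f r
  coeff_mem : ∀ i d, (hs i).coeff d ∈ 𝔤 i * 𝔣⁻¹
  sub_eq_sum : f - r = ∑ i, hs i * g i
  degree_mul_le : ∀ i, m.toSyn (mdeg m (hs i * g i)) ≤ m.toSyn (mdeg m f)
  degree_le : m.toSyn (mdeg m r) ≤ m.toSyn (mdeg m f)

variable {m g 𝔤 𝔣}

theorem IsStandardReduction.refl (f : MvPolynomial (Fin n) (FractionRing R)) :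
    IsStandardReduction m g 𝔤 𝔣 f f 0 where
  reflTransGen := .refl
  coeff_mem _ _ := by simpa using FractionalIdeal.zero_mem _
  sub_eq_sum := by simp
  degree_mul_le _ := by
    rw [Pi.zero_apply, zero_mul, mdeg_eq_degree, MonomialOrder.degree_zero, map_zero]
    exact m.zero_le _
  degree_le := le_rfl

theorem IsStandardReduction.trans {f h r : MvPolynomial (Fin n) (FractionRing R)}
    {q hs : Fin l → MvPolynomial (Fin n) (FractionRing R)}
    (h₁ : IsStandardReduction m g 𝔤 𝔣 f h q) (h₂ : IsStandardReduction m g 𝔤 𝔣 h r hs) :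
    IsStandardReduction m g 𝔤 𝔣 f r (q + hs) where
  reflTransGen := h₁.reflTransGen.trans h₂.reflTransGen
  coeff_mem i d := by
    rw [Pi.add_apply, coeff_add]
    exact Submodule.add_mem _ (h₁.coeff_mem i d) (h₂.coeff_mem i d)
  sub_eq_sum := by
    simp only [Pi.add_apply, add_mul, Finset.sum_add_distrib, ← h₁.sub_eq_sum,
      ← h₂.sub_eq_sum]
    ring
  degree_mul_le i := by
    rw [Pi.add_apply, add_mul]
    exact MonomialOrder.degree_add_le.trans
      (sup_le (h₁.degree_mul_le i) ((h₂.degree_mul_le i).trans h₁.degree_le))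
  degree_le := h₂.degree_le.trans h₁.degree_le

theorem Reducible.exists_coeffs (h𝔣 : 𝔣 ≠ 0) {f : MvPolynomial (Fin n) (FractionRing R)}
    (hred : Reducible m g 𝔤 𝔣 f) :
    ∃ a : Fin l → FractionRing R, (∀ i, a i ∈ 𝔤 i * 𝔣⁻¹) ∧
      (∀ i, a i ≠ 0 → mdeg m (g i) ≤ mdeg m f) ∧ plc m f = ∑ i, a i * plc m (g i) := by
  classical
  set J := Finset.univ.filter fun i => ∃ γ, mdeg m f = mdeg m (g i) + γ
  have hmem : plc m f ∈ ∑ i ∈ J,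
      𝔤 i * 𝔣⁻¹ * FractionalIdeal.spanSingleton (nonZeroDivisors R) (plc m (g i)) := by
    have := mul_le_mul_right hred 𝔣⁻¹
    rw [← mul_assoc, inv_mul_cancel₀ h𝔣, one_mul, Finset.mul_sum] at this
    convert this (FractionalIdeal.mem_spanSingleton_self _ _) using 2 with i
    ring
  obtain ⟨a, ha, ha0, hsum⟩ :=
    FractionalIdeal.exists_eq_sum_mul_of_mem_sum_mul_spanSingleton hmem
  refine ⟨a, ha, fun i hi => ?_, hsum⟩
  have hiJ : i ∈ J := by_contra fun hiJ => hi (ha0 i hiJ)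
  obtain ⟨γ, hγ⟩ := (Finset.mem_filter.mp hiJ).2
  exact le_iff_exists_add.mpr ⟨γ, hγ⟩

theorem Reducible.exists_isStandardReduction_sub (h𝔣 : 𝔣 ≠ 0)
    {f : MvPolynomial (Fin n) (FractionRing R)} (hred : Reducible m g 𝔤 𝔣 f) :
    ∃ q : Fin l → MvPolynomial (Fin n) (FractionRing R),
      IsStandardReduction m g 𝔤 𝔣 f (f - ∑ i, q i * g i) q ∧
      (f - ∑ i, q i * g i ≠ 0 →
        m.toSyn (mdeg m (f - ∑ i, q i * g i)) < m.toSyn (mdeg m f)) := by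
  obtain ⟨a, ha, hdvd, hlc⟩ := hred.exists_coeffs h𝔣
  set q := fun i => monomial (mdeg m f - mdeg m (g i)) (a i)
  have hdeg (i : Fin l) : m.toSyn (mdeg m (q i * g i)) ≤ m.toSyn (mdeg m f) := by
    by_cases hai : a i = 0
    · simp only [q, hai, zero_mul, mdeg_eq_degree, MonomialOrder.degree_zero,
        map_zero, m.zero_le]
    · exact MonomialOrder.toSyn_degree_monomial_sub_degree_mul_le (hdvd i hai) _
  have hcoeff (i : Fin l) : (q i * g i).coeff (mdeg m f) = a i * plc m (g i) := by
    by_cases hai : a i = 0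
    · simp [q, hai]
    · exact MonomialOrder.coeff_monomial_sub_degree_mul (hdvd i hai) _
  have hsum_deg : m.toSyn (mdeg m (∑ i, q i * g i)) ≤ m.toSyn (mdeg m f) :=
    MonomialOrder.degree_sum_le.trans (Finset.sup_le fun i _ => hdeg i)
  have hstep : OneStep m g 𝔤 𝔣 f (f - ∑ i, q i * g i) :=
    ⟨a, ha, fun i hi => le_iff_exists_add.mp (hdvd i hi), hlc, rfl⟩
  refine ⟨q, ⟨.single hstep, fun i d => ?_, sub_sub_cancel _ _, hdeg,
    MonomialOrder.degree_sub_le.trans (sup_le le_rfl hsum_deg)⟩,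
    MonomialOrder.toSyn_degree_sub_lt hsum_deg ?_⟩
  · rw [coeff_monomial]
    split_ifs
    exacts [ha i, FractionalIdeal.zero_mem _]
  · rw [coeff_sum]
    exact (Finset.sum_congr rfl fun i _ => hcoeff i).trans hlc.symm

variable (m g 𝔤) in
theorem exists_isStandardReduction (h𝔣 : 𝔣 ≠ 0) (f : MvPolynomial (Fin n) (FractionRing R)) :
    ∃ r hs, IsStandardReduction m g 𝔤 𝔣 f r hs ∧ (r = 0 ∨ ¬ Reducible m g 𝔤 𝔣 r) := by
  induction hd : m.toSyn (mdeg m f) using WellFoundedLT.induction generalizing f with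
  | _ d ih =>
  by_cases hred : Reducible m g 𝔤 𝔣 f
  · obtain ⟨q, hq, hlt⟩ := hred.exists_isStandardReduction_sub h𝔣
    by_cases h0 : f - ∑ i, q i * g i = 0
    · exact ⟨_, q, hq, .inl h0⟩
    · obtain ⟨r, hs, hr, hmin⟩ := ih _ (hd ▸ hlt h0) _ rfl
      exact ⟨r, q + hs, hq.trans hr, hmin⟩
  · exact ⟨f, 0, .refl f, .inr hred⟩

end Reduction

theorem stmt10_general {R : Type*} [CommRing R] [IsDomain R] [IsDedekindDomain R] {n l : ℕ}
    (m : MonomialOrder (Fin n))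
    (f : MvPolynomial (Fin n) (FractionRing R))
    (𝔣 : FractionalIdeal (nonZeroDivisors R) (FractionRing R))
    (h𝔣 : 𝔣 ≠ 0)
    (g : Fin l → MvPolynomial (Fin n) (FractionRing R))
    (𝔤 : Fin l → FractionalIdeal (nonZeroDivisors R) (FractionRing R)) :
    ∃ (r : MvPolynomial (Fin n) (FractionRing R))
      (hs : Fin l → MvPolynomial (Fin n) (FractionRing R)),
      Relation.ReflTransGen (OneStep m g 𝔤 𝔣) f r ∧
      (r = 0 ∨ ¬ Reducible m g 𝔤 𝔣 r) ∧
      (∀ i, ∀ d, (hs i).coeff d ∈ 𝔤 i * 𝔣⁻¹) ∧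
      f - r = ∑ i, hs i * g i ∧
      m.toSyn (mdeg m f) =
        (Finset.univ.sup fun i => m.toSyn (mdeg m (hs i * g i))) ⊔ m.toSyn (mdeg m r) := by
  obtain ⟨r, hs, hr, hmin⟩ := exists_isStandardReduction m g 𝔤 h𝔣 f
  exact ⟨r, hs, hr.reflTransGen, hmin, hr.coeff_mem, hr.sub_eq_sum,
    MonomialOrder.toSyn_degree_eq_sup hr.sub_eq_sum (fun i _ => hr.degree_mul_le i) hr.degree_le⟩

/-- For a pseudo-polynomial `(f, 𝔣)` and nonzero pseudo-polynomials
`G = {(gᵢ, 𝔤ᵢ)}` there exist a pseudo-polynomial `(r, 𝔣)` minimal w.r.t. `G` and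
polynomials `hᵢ ∈ (𝔤ᵢ𝔣⁻¹)[x]` with `(f,𝔣) →_G+ (r,𝔣)`, `f − r = ∑ᵢ hᵢ gᵢ`, and
`deg f = max(maxᵢ deg(hᵢ gᵢ), deg r)`. -/
theorem stmt10 {R : Type*} [CommRing R] [IsDomain R] [IsDedekindDomain R] {n l : ℕ}
    (m : MonomialOrder (Fin n))
    (f : MvPolynomial (Fin n) (FractionRing R))
    (𝔣 : FractionalIdeal (nonZeroDivisors R) (FractionRing R))
    (hf : f ≠ 0) (h𝔣 : 𝔣 ≠ 0)
    (hpf : ∀ c ∈ 𝔣, ∀ d, c * f.coeff d ∈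
      (1 : FractionalIdeal (nonZeroDivisors R) (FractionRing R)))
    (g : Fin l → MvPolynomial (Fin n) (FractionRing R))
    (𝔤 : Fin l → FractionalIdeal (nonZeroDivisors R) (FractionRing R))
    (hg : ∀ i, g i ≠ 0) (h𝔤 : ∀ i, 𝔤 i ≠ 0)
    (hpg : ∀ i, ∀ c ∈ 𝔤 i, ∀ d, c * (g i).coeff d ∈
      (1 : FractionalIdeal (nonZeroDivisors R) (FractionRing R))) :
    ∃ (r : MvPolynomial (Fin n) (FractionRing R))
      (hs : Fin l → MvPolynomial (Fin n) (FractionRing R)),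
      Relation.ReflTransGen (OneStep m g 𝔤 𝔣) f r ∧
      (r = 0 ∨ ¬ Reducible m g 𝔤 𝔣 r) ∧
      (∀ i, ∀ d, (hs i).coeff d ∈ 𝔤 i * 𝔣⁻¹) ∧
      f - r = ∑ i, hs i * g i ∧
      m.toSyn (mdeg m f) =
        (Finset.univ.sup fun i => m.toSyn (mdeg m (hs i * g i))) ⊔ m.toSyn (mdeg m r) :=
  stmt10_general m f 𝔣 h𝔣 g 𝔤
end

section
/- Let I be an ideal of R[x] over a Dedekind domain R and G = {(g_i, 𝔤_i)} nonzero pseudo-polynomials contained in I with Lt(I) = Lt(G). If a_{ij}, 1 ≤ j ≤ n_i, are generators of the fractional ideal 𝔤_i for each i, then { a_{ij} g_i : i, j } is a Gröbner basis of I in the ordinary sense, i.e., ⟨LT(a_{ij}g_i)⟩ = Lt(I). -/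
open MvPolynomial

attribute [local instance] MvPolynomial.algebraMvPolynomial

lemma support_C_mul_aux {σ K : Type*} [Field K] {a : K} (ha : a ≠ 0)
    (f : MvPolynomial σ K) : (C a * f).support = f.support := by
  ext d
  simp [MvPolynomial.mem_support_iff, coeff_C_mul, ha]

lemma lt_C_mul {σ : Type*} (m : MonomialOrder σ) {K : Type*} [Field K] (a : K)
    (g : MvPolynomial σ K) :
    (monomial (mdeg m (C a * g))) (plc m (C a * g))
      = C a * monomial (mdeg m g) (plc m g) := by
  rcases eq_or_ne a 0 with rfl | ha
  · simp [plc]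
  · have h1 : mdeg m (C a * g) = mdeg m g := by
      unfold mdeg; rw [support_C_mul_aux ha]
    rw [h1]
    unfold plc
    rw [h1, coeff_C_mul, C_mul_monomial]

/-- Let `I` be an ideal of `R[x]` over a Dedekind domain `R` and
`G = {(gᵢ, 𝔤ᵢ)}` nonzero pseudo-polynomials contained in `I` with `Lt(I) = Lt(G)`.
If `a i j`, `j < N i`, are generators of the fractional ideal `𝔤ᵢ`, then
`{a i j • gᵢ}` is a Gröbner basis of `I` in the ordinary sense:
`⟨LT(a i j • gᵢ)⟩ = Lt(I)`. (Everything is viewed inside `K[x]` via the canonical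
embedding of `R[x]`.) -/
theorem stmt11 {R : Type*} [CommRing R] [IsDomain R] [IsDedekindDomain R] {n l : ℕ}
    (m : MonomialOrder (Fin n))
    (I : Ideal (MvPolynomial (Fin n) R))
    (g : Fin l → MvPolynomial (Fin n) (FractionRing R))
    (𝔤 : Fin l → FractionalIdeal (nonZeroDivisors R) (FractionRing R))
    (hg : ∀ i, g i ≠ 0) (h𝔤 : ∀ i, 𝔤 i ≠ 0)
    (hGI : ∀ i, ∀ c ∈ 𝔤 i, C c * g i ∈
      I.map (Algebra.linearMap (MvPolynomial (Fin n) R) (MvPolynomial (Fin n) (FractionRing R))))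
    (hGB : Submodule.span (MvPolynomial (Fin n) R)
        {x : MvPolynomial (Fin n) (FractionRing R) |
          ∃ p ∈ I.map (Algebra.linearMap (MvPolynomial (Fin n) R)
            (MvPolynomial (Fin n) (FractionRing R))),
            x = monomial (mdeg m p) (plc m p)} =
      Submodule.span (MvPolynomial (Fin n) R)
        (⋃ i, {x : MvPolynomial (Fin n) (FractionRing R) |
          ∃ c ∈ 𝔤 i, x = C c * monomial (mdeg m (g i)) (plc m (g i))}))
    (N : Fin l → ℕ) (a : ∀ i, Fin (N i) → FractionRing R)
    (ha : ∀ i, (𝔤 i : Submodule R (FractionRing R)) = Submodule.span R (Set.range (a i))) :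
    Submodule.span (MvPolynomial (Fin n) R)
        {x : MvPolynomial (Fin n) (FractionRing R) |
          ∃ i j, x = monomial (mdeg m (C (a i j) * g i)) (plc m (C (a i j) * g i))} =
      Submodule.span (MvPolynomial (Fin n) R)
        {x : MvPolynomial (Fin n) (FractionRing R) |
          ∃ p ∈ I.map (Algebra.linearMap (MvPolynomial (Fin n) R)
            (MvPolynomial (Fin n) (FractionRing R))),
            x = monomial (mdeg m p) (plc m p)} := by
  rw [hGB]
  have hmem : ∀ i j, a i j ∈ 𝔤 i := by
    intro i j
    have : a i j ∈ (𝔤 i : Submodule R (FractionRing R)) := by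
      rw [ha i]
      exact Submodule.subset_span ⟨j, rfl⟩
    exact this
  apply le_antisymm
  · rw [Submodule.span_le]
    rintro x ⟨i, j, rfl⟩
    rw [lt_C_mul]
    exact Submodule.subset_span (Set.mem_iUnion.2 ⟨i, a i j, hmem i j, rfl⟩)
  · rw [Submodule.span_le]
    rintro x hx
    obtain ⟨i, c, hc, rfl⟩ := Set.mem_iUnion.1 hx
    have hc' : c ∈ Submodule.span R (Set.range (a i)) := by
      rw [← ha i]; exact hc
    set S : Set (MvPolynomial (Fin n) (FractionRing R)) :=
      {x | ∃ i j, x = monomial (mdeg m (C (a i j) * g i)) (plc m (C (a i j) * g i))} with hS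
    set M := monomial (mdeg m (g i)) (plc m (g i)) with hM
    show C c * M ∈ Submodule.span (MvPolynomial (Fin n) R) S
    refine Submodule.span_induction
      (p := fun c _ => C c * M ∈ Submodule.span (MvPolynomial (Fin n) R) S)
      ?_ ?_ ?_ ?_ hc'
    · rintro _ ⟨j, rfl⟩
      exact Submodule.subset_span ⟨i, j, (lt_C_mul m (a i j) (g i)).symm⟩
    · simp
    · intro x y _ _ hx hy
      rw [C_add, add_mul]
      exact Submodule.add_mem _ hx hy
    · intro r x _ hx
      have : C (r • x) * M = (C r : MvPolynomial (Fin n) R) • (C x * M) := by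
        show _ = MvPolynomial.map (algebraMap R (FractionRing R)) (C r) * (C x * M)
        rw [map_C]
        rw [Algebra.smul_def]
        rw [C_mul]
        ring
      rw [this]
      exact Submodule.smul_mem _ _ hx
end

section
/- Let G = {(g_i, 𝔤_i) : 1 ≤ i ≤ l} be nonzero pseudo-polynomials over a Dedekind domain R. Then the syzygy module Syz(G) = ker(φ), where φ: 𝔤₁[x] × ... × 𝔤_l[x] → R[x], (h₁,...,h_l) ↦ Σ h_i g_i, is a finitely generated R[x]-module, and it has a finite generating set of homogeneous pseudo-syzygies when the g_i are terms. -/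
open MvPolynomial

attribute [local instance] MvPolynomial.algebraMvPolynomial

/-- `h` is a syzygy of the family `(gᵢ, 𝔤ᵢ)`: `hᵢ ∈ 𝔤ᵢ[x]` and `∑ hᵢ gᵢ = 0`. -/
def IsSyz {R : Type*} [CommRing R] [IsDomain R] [IsDedekindDomain R] {n l : ℕ}
    (g : Fin l → MvPolynomial (Fin n) (FractionRing R))
    (𝔤 : Fin l → FractionalIdeal (nonZeroDivisors R) (FractionRing R))
    (h : Fin l → MvPolynomial (Fin n) (FractionRing R)) : Prop :=
  (∀ i, ∀ d, (h i).coeff d ∈ 𝔤 i) ∧ ∑ i, h i * g i = 0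


section Aux

variable {R : Type*} [CommRing R] {K : Type*} [CommRing K] [Algebra R K] {σ : Type*}

lemma smul_def' (p : MvPolynomial σ R) (q : MvPolynomial σ K) :
    p • q = MvPolynomial.map (algebraMap R K) p * q := rfl

lemma mdeg_monomial (m : MonomialOrder σ) {a : σ →₀ ℕ} {c : K} (hc : c ≠ 0) :
    mdeg m ((monomial a) c) = a := by
  classical
  unfold mdeg
  rw [support_monomial, if_neg hc, Finset.sup_singleton]
  simp

/-- The `R[x]`-submodule of `K[x]` of polynomials with coefficients in `G`. -/
noncomputable def polySub (σ : Type*) (G : Submodule R K) :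
    Submodule (MvPolynomial σ R) (MvPolynomial σ K) where
  carrier := {p | ∀ d, p.coeff d ∈ G}
  add_mem' := fun {a b} ha hb d => by
    simpa [coeff_add] using G.add_mem (ha d) (hb d)
  zero_mem' := fun d => by simp
  smul_mem' := fun c p hp d => by
    classical
    rw [smul_def', coeff_mul]
    refine Submodule.sum_mem _ fun x _ => ?_
    rw [coeff_map, ← Algebra.smul_def]
    exact G.smul_mem _ (hp _)

lemma mem_polySub {G : Submodule R K} {p : MvPolynomial σ K} :
    p ∈ polySub σ G ↔ ∀ d, p.coeff d ∈ G := Iff.rfl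

lemma monomial_mem_span_C {T : Set K} {a : K}
    (ha : a ∈ Submodule.span R T) (d : σ →₀ ℕ) :
    (monomial d) a ∈ Submodule.span (MvPolynomial σ R) (C '' T : Set (MvPolynomial σ K)) := by
  induction ha using Submodule.span_induction with
  | mem a ha =>
    have : (monomial d) a = (monomial d (1 : R) : MvPolynomial σ R) • C a := by
      rw [smul_def', map_monomial]
      rw [C_apply, monomial_mul, add_zero, map_one, one_mul]
    rw [this]
    exact Submodule.smul_mem _ _ (Submodule.subset_span ⟨a, ha, rfl⟩)
  | zero => simp
  | add a b _ _ ha hb => rw [map_add]; exact Submodule.add_mem _ ha hb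
  | smul r a _ ha =>
    have : (monomial d) (r • a) = (C r : MvPolynomial σ R) • (monomial d) a := by
      rw [smul_def', map_C, Algebra.smul_def, C_mul_monomial]
    rw [this]
    exact Submodule.smul_mem _ _ ha

lemma polySub_fg (G : Submodule R K) (hG : G.FG) : (polySub σ G).FG := by
  classical
  obtain ⟨T, hT⟩ := hG
  refine ⟨T.image C, le_antisymm ?_ ?_⟩
  · rw [Submodule.span_le]
    intro q hq
    simp only [Finset.coe_image, Set.mem_image] at hq
    obtain ⟨a, haT, rfl⟩ := hq
    intro d
    rw [coeff_C]
    split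
    · exact hT ▸ Submodule.subset_span haT
    · exact G.zero_mem
  · intro p hp
    rw [← support_sum_monomial_coeff p]
    refine Submodule.sum_mem _ fun d _ => ?_
    have hmem : p.coeff d ∈ Submodule.span R (T : Set K) := hT ▸ hp d
    have := monomial_mem_span_C (σ := σ) hmem d
    rwa [Finset.coe_image]

/-- fg of a submodule contained in an fg submodule over a Noetherian ring. -/
lemma fg_of_le_fg {A M : Type*} [Ring A] [IsNoetherianRing A] [AddCommGroup M] [Module A M]
    {N P : Submodule A M} (hP : P.FG) (h : N ≤ P) : N.FG := by
  haveI : IsNoetherian A P := isNoetherian_of_fg_of_noetherian P hP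
  have hfg : (N.comap P.subtype).FG := IsNoetherian.noetherian _
  have hmap : (N.comap P.subtype).map P.subtype = N := by
    rw [Submodule.map_comap_eq, Submodule.range_subtype]
    exact inf_eq_right.mpr h
  exact hmap ▸ hfg.map _

end Aux

section Main

variable {R : Type*} [CommRing R] [IsDomain R] [IsDedekindDomain R] {n l : ℕ}
variable (g : Fin l → MvPolynomial (Fin n) (FractionRing R))
variable (𝔤 : Fin l → FractionalIdeal (nonZeroDivisors R) (FractionRing R))

/-- The syzygy module as a submodule of `(K[x])^l` over `R[x]`. -/
noncomputable def syzMod :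
    Submodule (MvPolynomial (Fin n) R) (Fin l → MvPolynomial (Fin n) (FractionRing R)) where
  carrier := {h | IsSyz g 𝔤 h}
  add_mem' := by
    rintro a b ⟨ha1, ha2⟩ ⟨hb1, hb2⟩
    refine ⟨fun i d => ?_, ?_⟩
    · simp only [Pi.add_apply, coeff_add]
      exact FractionalIdeal.mem_coe.mp (Submodule.add_mem _
        (FractionalIdeal.mem_coe.mpr (ha1 i d)) (FractionalIdeal.mem_coe.mpr (hb1 i d)))
    · simp only [Pi.add_apply, add_mul]
      rw [Finset.sum_add_distrib, ha2, hb2, add_zero]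
  zero_mem' := by
    refine ⟨fun i d => ?_, by simp⟩
    simpa using FractionalIdeal.mem_coe.mp (Submodule.zero_mem _)
  smul_mem' := by
    rintro p h ⟨h1, h2⟩
    refine ⟨fun i d => ?_, ?_⟩
    · have := (polySub (Fin n) ((𝔤 i : Submodule R (FractionRing R)))).smul_mem p
        (fun d => FractionalIdeal.mem_coe.mpr (h1 i d))
      exact FractionalIdeal.mem_coe.mp (this d)
    · simp only [Pi.smul_apply, smul_def', mul_assoc]
      rw [← Finset.mul_sum, h2, mul_zero]

lemma mem_syzMod {h : Fin l → MvPolynomial (Fin n) (FractionRing R)} :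
    h ∈ syzMod g 𝔤 ↔ IsSyz g 𝔤 h := Iff.rfl

lemma syzMod_fg : (syzMod g 𝔤).FG := by
  have hNfg : (Submodule.pi Set.univ
      (fun i => polySub (Fin n) ((𝔤 i : Submodule R (FractionRing R))))).FG :=
    Submodule.fg_pi fun i =>
      polySub_fg _ (FractionalIdeal.fg_of_isNoetherianRing le_rfl (𝔤 i))
  refine fg_of_le_fg hNfg fun h hh => ?_
  rw [Submodule.mem_pi]
  exact fun i _ d => FractionalIdeal.mem_coe.mpr (hh.1 i d)

/-- The set of homogeneous syzygies. -/
def homSet (m : MonomialOrder (Fin n)) : Set (Fin l → MvPolynomial (Fin n) (FractionRing R)) :=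
  {h | IsSyz g 𝔤 h ∧ ∃ β : Fin n →₀ ℕ, ∀ i, ∃ b γ, h i = monomial γ b ∧
    (b ≠ 0 → γ + mdeg m (g i) = β)}

lemma syz_mem_span_homSet (m : MonomialOrder (Fin n)) (α : Fin l → (Fin n →₀ ℕ))
    (c : Fin l → FractionRing R) (hαc : ∀ i, g i = monomial (α i) (c i))
    (hc : ∀ i, c i ≠ 0)
    {h : Fin l → MvPolynomial (Fin n) (FractionRing R)} (hh : IsSyz g 𝔤 h) :
    h ∈ Submodule.span (MvPolynomial (Fin n) R) (homSet g 𝔤 m) := by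
  classical
  set B : Finset (Fin n →₀ ℕ) := Finset.univ.biUnion (fun i => (h i).support.image (· + α i))
    with hB
  set comp : (Fin n →₀ ℕ) → Fin l → MvPolynomial (Fin n) (FractionRing R) :=
    fun β i => if α i ≤ β then monomial (β - α i) ((h i).coeff (β - α i)) else 0 with hcomp
  have hdecomp : h = ∑ β ∈ B, comp β := by
    funext i
    rw [Finset.sum_apply]
    ext d
    rw [coeff_sum]
    have h0 : ∀ b ∈ B, b ≠ d + α i → coeff d (comp b i) = 0 := by
      intro b _ hbne
      simp only [hcomp]
      split_ifs with hle
      · rw [coeff_monomial, if_neg]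
        intro hEq
        exact hbne ((tsub_eq_iff_eq_add_of_le hle).mp hEq)
      · simp
    have h1 : d + α i ∉ B → coeff d (comp (d + α i) i) = 0 := by
      intro hnot
      have hd : d ∉ (h i).support := by
        intro hd
        exact hnot (Finset.mem_biUnion.mpr ⟨i, Finset.mem_univ i,
          Finset.mem_image.mpr ⟨d, hd, rfl⟩⟩)
      simp only [hcomp, if_pos (le_add_self : α i ≤ d + α i), add_tsub_cancel_right,
        coeff_monomial, if_pos rfl]
      simpa using hd
    rw [Finset.sum_eq_single (d + α i) h0 h1]
    simp only [hcomp, if_pos (le_add_self : α i ≤ d + α i), add_tsub_cancel_right,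
      coeff_monomial, if_pos rfl, if_true]
  have hcompH : ∀ β, comp β ∈ homSet g 𝔤 m := by
    intro β
    have e1 : ∀ i, comp β i * g i = monomial β ((h i * g i).coeff β) := by
      intro i
      rw [hαc i, coeff_mul_monomial']
      by_cases hle : α i ≤ β
      · simp only [hcomp, if_pos hle, monomial_mul]
        rw [tsub_add_cancel_of_le hle]
      · simp [hcomp, if_neg hle]
    refine ⟨⟨fun i d => ?_, ?_⟩, β, fun i => ?_⟩
    · by_cases hle : α i ≤ β
      · simp only [hcomp, if_pos hle, coeff_monomial]
        split
        · exact hh.1 i _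
        · exact FractionalIdeal.mem_coe.mp (Submodule.zero_mem _)
      · simp only [hcomp, if_neg hle, coeff_zero]
        exact FractionalIdeal.mem_coe.mp (Submodule.zero_mem _)
    · calc ∑ i, comp β i * g i = ∑ i, monomial β ((h i * g i).coeff β) := by simp only [e1]
        _ = monomial β ((∑ i, h i * g i).coeff β) := by rw [← map_sum, coeff_sum]
        _ = 0 := by rw [hh.2, coeff_zero, monomial_zero]
    · by_cases hle : α i ≤ β
      · refine ⟨(h i).coeff (β - α i), β - α i, by simp only [hcomp, if_pos hle], fun hb => ?_⟩
        rw [hαc i, mdeg_monomial m (hc i)]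
        exact tsub_add_cancel_of_le hle
      · exact ⟨0, 0, by simp [hcomp, if_neg hle], by simp⟩
  rw [hdecomp]
  exact Submodule.sum_mem _ fun β _ => Submodule.subset_span (hcompH β)

end Main

/-- For nonzero pseudo-polynomials `G = {(gᵢ, 𝔤ᵢ)}` over a Dedekind
domain `R`, the syzygy module `Syz(G) = ker(φ : 𝔤₁[x] × ⋯ × 𝔤_l[x] → R[x])` is a
finitely generated `R[x]`-module, and when all `gᵢ` are terms it has a finite
generating set of homogeneous pseudo-syzygies. -/
theorem stmt15 {R : Type*} [CommRing R] [IsDomain R] [IsDedekindDomain R] {n l : ℕ}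
    (m : MonomialOrder (Fin n))
    (g : Fin l → MvPolynomial (Fin n) (FractionRing R))
    (𝔤 : Fin l → FractionalIdeal (nonZeroDivisors R) (FractionRing R))
    (hg : ∀ i, g i ≠ 0) (h𝔤 : ∀ i, 𝔤 i ≠ 0)
    (hpg : ∀ i, ∀ c ∈ 𝔤 i, ∀ d, c * (g i).coeff d ∈
      (1 : FractionalIdeal (nonZeroDivisors R) (FractionRing R))) :
    (∃ (k : ℕ) (s : Fin k → (Fin l → MvPolynomial (Fin n) (FractionRing R))),
      (∀ j, IsSyz g 𝔤 (s j)) ∧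
      {h | IsSyz g 𝔤 h} =
        (Submodule.span (MvPolynomial (Fin n) R) (Set.range s) :
          Set (Fin l → MvPolynomial (Fin n) (FractionRing R))))
    ∧ ((∀ i, ∃ α c, g i = monomial α c) →
      ∃ (k : ℕ) (v : Fin k → (Fin l → MvPolynomial (Fin n) (FractionRing R)))
        (𝔥 : Fin k → FractionalIdeal (nonZeroDivisors R) (FractionRing R)),
        (∀ j, 𝔥 j ≠ 0) ∧
        (∀ j, ∀ c ∈ 𝔥 j, IsSyz g 𝔤 (fun i => C c * v j i)) ∧
        (∀ j, ∃ β : Fin n →₀ ℕ, ∀ i, ∃ b γ, v j i = monomial γ b ∧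
          (b ≠ 0 → γ + mdeg m (g i) = β)) ∧
        {h | IsSyz g 𝔤 h} =
          (Submodule.span (MvPolynomial (Fin n) R)
            (⋃ j, {x : Fin l → MvPolynomial (Fin n) (FractionRing R) |
              ∃ c ∈ 𝔥 j, x = fun i => C c * v j i}) :
            Set (Fin l → MvPolynomial (Fin n) (FractionRing R)))) := by
  classical
  have hmem : ∀ h, h ∈ syzMod g 𝔤 ↔ IsSyz g 𝔤 h := fun h => Iff.rfl
  constructor
  · obtain ⟨k, s, hs⟩ := Submodule.fg_iff_exists_fin_generating_family.mp (syzMod_fg g 𝔤)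
    refine ⟨k, s, fun j => (hmem _).mp (hs ▸ Submodule.subset_span (Set.mem_range_self j)), ?_⟩
    rw [hs]
    rfl
  · intro hterm
    choose α c hαc using hterm
    have hc : ∀ i, c i ≠ 0 := by
      intro i hci
      exact hg i (by rw [hαc i, hci, monomial_zero])
    obtain ⟨S, hS⟩ := syzMod_fg g 𝔤
    have hSsub : ∀ x ∈ S, ∃ T : Finset (Fin l → MvPolynomial (Fin n) (FractionRing R)),
        ↑T ⊆ homSet g 𝔤 m ∧ x ∈ Submodule.span (MvPolynomial (Fin n) R) (T : Set _) := by
      intro x hx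
      exact Submodule.mem_span_finite_of_mem_span
        (syz_mem_span_homSet g 𝔤 m α c hαc hc ((hmem x).mp (hS ▸ Submodule.subset_span hx)))
    choose! T hT1 hT2 using hSsub
    set T0 : Finset (Fin l → MvPolynomial (Fin n) (FractionRing R)) := S.biUnion T with hT0
    have hT0H : (T0 : Set _) ⊆ homSet g 𝔤 m := by
      intro x hx
      rw [Finset.mem_coe, hT0, Finset.mem_biUnion] at hx
      obtain ⟨a, ha, hxa⟩ := hx
      exact hT1 a ha hxa
    have hT0M : ∀ x ∈ (T0 : Set _), x ∈ syzMod g 𝔤 := fun x hx => (hT0H hx).1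
    have hspanT0 : Submodule.span (MvPolynomial (Fin n) R) (T0 : Set _) = syzMod g 𝔤 := by
      apply le_antisymm
      · exact Submodule.span_le.mpr hT0M
      · rw [← hS, Submodule.span_le]
        intro x hx
        exact Submodule.span_mono (Finset.coe_subset.mpr (Finset.subset_biUnion_of_mem T hx))
          (hT2 x hx)
    let v : Fin T0.card → (Fin l → MvPolynomial (Fin n) (FractionRing R)) :=
      fun j => (T0.equivFin.symm j : _)
    have hvT0 : ∀ j, v j ∈ (T0 : Set _) := fun j => (T0.equivFin.symm j).2
    have hCmul : ∀ c' : FractionRing R,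
        c' ∈ (1 : FractionalIdeal (nonZeroDivisors R) (FractionRing R)) →
        ∀ w : Fin l → MvPolynomial (Fin n) (FractionRing R), w ∈ syzMod g 𝔤 →
        (fun i => C c' * w i) ∈ syzMod g 𝔤 := by
      intro c' hc' w hw
      obtain ⟨r, hr⟩ := (FractionalIdeal.mem_one_iff _).mp hc'
      have heq : (fun i => C c' * w i) = (C r : MvPolynomial (Fin n) R) • w := by
        funext i
        rw [Pi.smul_apply, smul_def', map_C, hr]
      rw [heq]
      exact Submodule.smul_mem _ _ hw
    refine ⟨T0.card, v, fun _ => 1, fun j h1 => ?_, fun j c' hc' => ?_,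
      fun j => (hT0H (hvT0 j)).2, ?_⟩
    · have h1' : (1 : FractionalIdeal (nonZeroDivisors R) (FractionRing R)) = 0 := h1
      have h11 := FractionalIdeal.one_mem_one (P := FractionRing R) (nonZeroDivisors R)
      rw [h1'] at h11
      exact one_ne_zero ((FractionalIdeal.mem_zero_iff _).mp h11)
    · exact (hmem _).mp (hCmul c' hc' (v j) (hT0M _ (hvT0 j)))
    · have hsp : Submodule.span (MvPolynomial (Fin n) R)
          (⋃ j, {x : Fin l → MvPolynomial (Fin n) (FractionRing R) |
            ∃ c' ∈ (1 : FractionalIdeal (nonZeroDivisors R) (FractionRing R)),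
            x = fun i => C c' * v j i}) = syzMod g 𝔤 := by
        apply le_antisymm
        · rw [Submodule.span_le]
          rintro x hx
          simp only [Set.mem_iUnion, Set.mem_setOf_eq] at hx
          obtain ⟨j, c', hc', rfl⟩ := hx
          exact hCmul c' hc' (v j) (hT0M _ (hvT0 j))
        · rw [← hspanT0, Submodule.span_le]
          intro x hx
          refine Submodule.subset_span (Set.mem_iUnion.mpr ⟨T0.equivFin ⟨x, hx⟩,
            ⟨1, FractionalIdeal.one_mem_one _, ?_⟩⟩)
          funext i
          simp only [v, Equiv.symm_apply_apply, map_one, one_mul]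
      rw [hsp]
      rfl
end

section
/- Let (a₁x^{α₁}, 𝔤₁) and (a₂x^{α₂}, 𝔤₂) be nonzero pseudo-terms over a Dedekind domain R. Then the syzygy module Syz((a₁x^{α₁},𝔤₁),(a₂x^{α₂},𝔤₂)) ⊆ 𝔤₁[x] × 𝔤₂[x] is generated as an R[x]-module by the pseudo-syzygy s₁₂ = ((lcm(x^{α₁},x^{α₂})/x^{α₁} · (1/a₁), −lcm(x^{α₁},x^{α₂})/x^{α₂} · (1/a₂)), a₁𝔤₁ ∩ a₂𝔤₂), i.e., Syz equals (a₁𝔤₁ ∩ a₂𝔤₂)[x]·s₁₂. -/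
open MvPolynomial

private lemma frac_neg_mem {R : Type*} [CommRing R] {K : Type*} [CommRing K] [Algebra R K]
    {S : Submonoid R} {I : FractionalIdeal S K} {x : K} (h : x ∈ I) : -x ∈ I := by
  rw [← FractionalIdeal.mem_coe] at h ⊢
  exact Submodule.neg_mem _ h

/-- Let `(a₁x^{α₁}, 𝔤₁)`, `(a₂x^{α₂}, 𝔤₂)` be nonzero pseudo-terms over
a Dedekind domain `R`. Then the syzygy module
`Syz ⊆ 𝔤₁[x] × 𝔤₂[x]` is generated as an `R[x]`-module by the pseudo-syzygy
`s₁₂ = ((lcm/x^{α₁})·(1/a₁), −(lcm/x^{α₂})·(1/a₂))` with coefficient ideal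
`a₁𝔤₁ ∩ a₂𝔤₂`; i.e. `Syz = (a₁𝔤₁ ∩ a₂𝔤₂)[x]·s₁₂`. -/
theorem stmt16 {R : Type*} [CommRing R] [IsDomain R] [IsDedekindDomain R] {n : ℕ}
    (α₁ α₂ : Fin n →₀ ℕ) (a₁ a₂ : FractionRing R) (ha₁ : a₁ ≠ 0) (ha₂ : a₂ ≠ 0)
    (𝔤₁ 𝔤₂ : FractionalIdeal (nonZeroDivisors R) (FractionRing R))
    (h𝔤₁ : 𝔤₁ ≠ 0) (h𝔤₂ : 𝔤₂ ≠ 0)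
    (hp₁ : ∀ c ∈ 𝔤₁, c * a₁ ∈ (1 : FractionalIdeal (nonZeroDivisors R) (FractionRing R)))
    (hp₂ : ∀ c ∈ 𝔤₂, c * a₂ ∈ (1 : FractionalIdeal (nonZeroDivisors R) (FractionRing R))) :
    {h : Fin 2 → MvPolynomial (Fin n) (FractionRing R) |
        (∀ d, (h 0).coeff d ∈ 𝔤₁) ∧ (∀ d, (h 1).coeff d ∈ 𝔤₂) ∧
        h 0 * monomial α₁ a₁ + h 1 * monomial α₂ a₂ = 0}
      = {x : Fin 2 → MvPolynomial (Fin n) (FractionRing R) |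
          ∃ p : MvPolynomial (Fin n) (FractionRing R),
            (∀ d, p.coeff d ∈
              FractionalIdeal.spanSingleton (nonZeroDivisors R) a₁ * 𝔤₁ ⊓
                FractionalIdeal.spanSingleton (nonZeroDivisors R) a₂ * 𝔤₂) ∧
            x = fun i => p * (![monomial (α₁ ⊔ α₂ - α₁) a₁⁻¹,
              -monomial (α₁ ⊔ α₂ - α₂) a₂⁻¹] i)} := by
  classical
  set γ : Fin n →₀ ℕ := α₁ ⊔ α₂ with hγ
  have hγ1 : γ - α₁ + α₁ = γ := tsub_add_cancel_of_le le_sup_left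
  have hγ2 : γ - α₂ + α₂ = γ := tsub_add_cancel_of_le le_sup_right
  have hmono : (monomial (α₂ : Fin n →₀ ℕ) a₂ : MvPolynomial (Fin n) (FractionRing R)) ≠ 0 := by
    simpa [MvPolynomial.monomial_eq_zero] using ha₂
  have key1 : (monomial (γ - α₁) a₁⁻¹ : MvPolynomial (Fin n) (FractionRing R)) *
      monomial α₁ a₁ = monomial γ 1 := by
    rw [monomial_mul, hγ1, inv_mul_cancel₀ ha₁]
  have key2 : (monomial (γ - α₂) a₂⁻¹ : MvPolynomial (Fin n) (FractionRing R)) *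
      monomial α₂ a₂ = monomial γ 1 := by
    rw [monomial_mul, hγ2, inv_mul_cancel₀ ha₂]
  ext h
  simp only [Set.mem_setOf_eq]
  constructor
  · rintro ⟨hc1, hc2, heq⟩
    -- vanishing of low coefficients of h 0
    have hvan : ∀ d : Fin n →₀ ℕ, ¬ γ - α₁ ≤ d → (h 0).coeff d = 0 := by
      intro d hd
      have hle : ¬ α₂ ≤ d + α₁ := by
        intro hle
        exact hd (tsub_le_iff_right.mpr (sup_le (le_add_self.trans le_rfl) hle))
      have E : h 0 * monomial α₁ a₁ = -(h 1 * monomial α₂ a₂) :=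
        eq_neg_of_add_eq_zero_left heq
      have := congrArg (coeff (d + α₁)) E
      rw [coeff_mul_monomial, coeff_neg, coeff_mul_monomial', if_neg hle, neg_zero] at this
      exact (mul_eq_zero.mp this).resolve_right ha₁
    set p : MvPolynomial (Fin n) (FractionRing R) :=
      C a₁ * MvPolynomial.divMonomial (h 0) (γ - α₁) with hpdef
    have hcoeffp : ∀ d, p.coeff d = a₁ * (h 0).coeff ((γ - α₁) + d) := by
      intro d
      rw [hpdef, coeff_C_mul, MvPolynomial.coeff_divMonomial]
    have hh0 : h 0 = p * monomial (γ - α₁) a₁⁻¹ := by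
      ext d
      rw [coeff_mul_monomial']
      split_ifs with hle
      · rw [hcoeffp, add_tsub_cancel_of_le hle, mul_comm, ← mul_assoc,
          inv_mul_cancel₀ ha₁, one_mul]
      · exact hvan d hle
    have hh1 : h 1 = p * -monomial (γ - α₂) a₂⁻¹ := by
      apply mul_right_cancel₀ hmono
      linear_combination heq - (monomial α₁ a₁ : MvPolynomial (Fin n) (FractionRing R)) * hh0
        + p * key2 - p * key1
    refine ⟨p, fun d => ⟨?_, ?_⟩, ?_⟩
    · exact FractionalIdeal.mem_singleton_mul.mpr ⟨_, hc1 _, hcoeffp d⟩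
    · refine FractionalIdeal.mem_singleton_mul.mpr ⟨-(h 1).coeff (d + (γ - α₂)),
        frac_neg_mem (hc2 _), ?_⟩
      have e2 : p * -monomial (γ - α₂) a₂⁻¹ = -(p * monomial (γ - α₂) a₂⁻¹) := by ring
      have hco : (h 1).coeff (d + (γ - α₂)) = -(p.coeff d * a₂⁻¹) := by
        rw [hh1, e2, coeff_neg, coeff_mul_monomial]
      rw [hco]
      field_simp
    · funext i
      fin_cases i
      · simpa using hh0
      · simpa using hh1
  · rintro ⟨p, hp, rfl⟩
    simp only [Matrix.cons_val_zero, Matrix.cons_val_one, Matrix.head_cons]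
    refine ⟨?_, ?_, ?_⟩
    · intro d
      rw [coeff_mul_monomial']
      split_ifs with hle
      · obtain ⟨c, hc, hcc⟩ := FractionalIdeal.mem_singleton_mul.mp (hp (d - (γ - α₁))).1
        rw [hcc, mul_right_comm, mul_inv_cancel₀ ha₁, one_mul]
        exact hc
      · exact 𝔤₁.zero_mem
    · intro d
      have e2 : p * -monomial (γ - α₂) a₂⁻¹ = -(p * monomial (γ - α₂) a₂⁻¹) := by ring
      rw [e2, coeff_neg, coeff_mul_monomial']
      split_ifs with hle
      · obtain ⟨c, hc, hcc⟩ := FractionalIdeal.mem_singleton_mul.mp (hp (d - (γ - α₂))).2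
        rw [hcc, mul_right_comm, mul_inv_cancel₀ ha₂, one_mul]
        exact frac_neg_mem hc
      · simpa using 𝔤₂.zero_mem
    · linear_combination p * key1 - p * key2
end
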